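/- Let H = [[A,B],[C,D]] ∈ M_N({±1}) be Hadamard with A ∈ M_r({±1}) invertible, r ≤ d, and r² < N. Write Pol(D) = (1/√N)(D − E) with E = C·(√N I_r + √(AᵗA))⁻¹·Pol(A)ᵗ·B. Then ‖E‖_∞ ≤ r²·c·√N/(N − r²), where c = ‖Pol(A) − A/√N‖_∞. -/

import Mathlib

/-! Write `S = √(AᵀA)`, so that `A = Pol(A) S` and `(√N - S)(√N + S) = N - AᵀA`. Hence the middle
factor `M = (√N + S)⁻¹ Pol(A)ᵀ` of `E = C M B` solves `(N - AᵀA) M = (√N Pol(A) - A)ᵀ`, i.e.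
`N M = √N (Pol(A) - A/√N)ᵀ + AᵀA M`. In the entrywise sup norm `‖XY‖ ≤ r ‖X‖ ‖Y‖` and the
entries of `A` are `±1`, so `N ‖M‖ ≤ √N c + r² ‖M‖`, and `r² < N` gives `‖M‖ ≤ √N c / (N - r²)`.
Two more applications of the product bound, with `‖B‖ = ‖C‖ = 1`, give the factor `r²`. -/

open Matrix

attribute [local instance] Matrix.normedAddCommGroup

section PSDSqrt

open scoped ComplexOrder

/-- The square root of a positive semidefinite matrix, as defined in Mathlib (Dec 2024). -/
noncomputable def Matrix.PosSemidef.sqrt {n 𝕜 : Type*} [Fintype n] [RCLike 𝕜] [DecidableEq n]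
    {A : Matrix n n 𝕜} (hA : A.PosSemidef) : Matrix n n 𝕜 :=
  hA.1.eigenvectorUnitary.1 * diagonal ((↑) ∘ (√·) ∘ hA.1.eigenvalues) *
    (star hA.1.eigenvectorUnitary : Matrix n n 𝕜)

end PSDSqrt

attribute [local instance] Matrix.normSMulClass

namespace Matrix

section Sqrt

open scoped ComplexOrder

variable {n 𝕜 : Type*} [Fintype n] [RCLike 𝕜] [DecidableEq n] {A : Matrix n n 𝕜}

theorem PosSemidef.posSemidef_sqrt (hA : A.PosSemidef) : hA.sqrt.PosSemidef := by
  unfold PosSemidef.sqrt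
  refine PosSemidef.mul_mul_conjTranspose_same ?_ _
  exact PosSemidef.diagonal fun i => by simp

theorem PosSemidef.sqrt_mul_self (hA : A.PosSemidef) : hA.sqrt * hA.sqrt = A := by
  set U : Matrix n n 𝕜 := hA.1.eigenvectorUnitary.1
  set V : Matrix n n 𝕜 := star hA.1.eigenvectorUnitary
  have hVU : V * U = 1 := Unitary.coe_star_mul_self _
  have hsq : ∀ i, (√(hA.1.eigenvalues i) : 𝕜) * √(hA.1.eigenvalues i) = hA.1.eigenvalues i :=
    fun i => by rw [← RCLike.ofReal_mul, Real.mul_self_sqrt (hA.eigenvalues_nonneg i)]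
  conv_rhs => rw [hA.1.spectral_theorem, Unitary.conjStarAlgAut_apply]
  calc hA.sqrt * hA.sqrt = U * (diagonal ((↑) ∘ (√·) ∘ hA.1.eigenvalues) * (V * U) *
      diagonal ((↑) ∘ (√·) ∘ hA.1.eigenvalues)) * V := by
        simp only [PosSemidef.sqrt, U, V, Matrix.mul_assoc]
    _ = _ := by
        rw [hVU, Matrix.mul_one, diagonal_mul_diagonal]
        congr 3
        funext i
        exact hsq i

end Sqrt

variable {l m n α : Type*} [Fintype l] [Fintype m] [Fintype n]

theorem norm_mul_le_card_mul [NonUnitalNormedRing α] (X : Matrix l m α) (Y : Matrix m n α) :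
    ‖X * Y‖ ≤ Fintype.card m * ‖X‖ * ‖Y‖ := by
  refine (norm_le_iff (by positivity)).mpr fun i j => ?_
  calc ‖(X * Y) i j‖ ≤ ∑ k, ‖X i k‖ * ‖Y k j‖ :=
        (norm_sum_le _ _).trans (Finset.sum_le_sum fun k _ => norm_mul_le _ _)
    _ ≤ ∑ _k : m, ‖X‖ * ‖Y‖ := by
        gcongr with k
        exacts [norm_entry_le_entrywise_sup_norm X, norm_entry_le_entrywise_sup_norm Y]
    _ = Fintype.card m * ‖X‖ * ‖Y‖ := by
        rw [Finset.sum_const, Finset.card_univ, nsmul_eq_mul, mul_assoc]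

theorem norm_mul_mul_le_card_mul {o : Type*} [Fintype o] [NonUnitalNormedRing α]
    (X : Matrix l m α) (Y : Matrix m n α) (Z : Matrix n o α) :
    ‖X * Y * Z‖ ≤ Fintype.card m * Fintype.card n * ‖X‖ * ‖Y‖ * ‖Z‖ :=
  calc ‖X * Y * Z‖ ≤ Fintype.card n * ‖X * Y‖ * ‖Z‖ := norm_mul_le_card_mul _ _
    _ ≤ Fintype.card n * (Fintype.card m * ‖X‖ * ‖Y‖) * ‖Z‖ := by
        gcongr; exact norm_mul_le_card_mul X Y
    _ = _ := by ring

theorem norm_le_one_of_forall_eq_one_or_eq_neg_one {M : Matrix l n ℝ}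
    (hM : ∀ i j, M i j = 1 ∨ M i j = -1) : ‖M‖ ≤ 1 :=
  (norm_le_iff zero_le_one).mpr fun i j => by rcases hM i j with h | h <;> simp [h]

theorem mul_self_smul_one_sub_transpose_mul_self_mul {R : Type*} [CommRing R] [DecidableEq n]
    (s : R) {A P S : Matrix n n R} (hS : Sᵀ = S) (hSS : S * S = Aᵀ * A) (hA : A = P * S)
    (hT : IsUnit (s • 1 + S).det) :
    ((s * s) • 1 - Aᵀ * A) * ((s • 1 + S)⁻¹ * Pᵀ) = (s • P - A)ᵀ := by
  have hfactor : (s * s) • (1 : Matrix n n R) - Aᵀ * A = (s • 1 - S) * (s • 1 + S) := by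
    simp only [← hSS, Matrix.sub_mul, Matrix.mul_add, Matrix.smul_mul, Matrix.mul_smul,
      Matrix.one_mul, Matrix.mul_one, smul_sub, smul_smul]
    abel
  rw [hfactor, Matrix.mul_assoc, ← Matrix.mul_assoc (s • 1 + S), mul_nonsing_inv _ hT,
    Matrix.one_mul, Matrix.sub_mul, Matrix.smul_mul, Matrix.one_mul, transpose_sub,
    transpose_smul, hA, transpose_mul, hS]

theorem norm_le_div_of_smul_one_sub_mul_eq [DecidableEq n] {t g : ℝ} {G : Matrix n n ℝ}
    {M Y : Matrix n m ℝ} (h : (t • 1 - G) * M = Y) (hG : ‖G‖ ≤ g)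
    (hg : Fintype.card n * g < t) : ‖M‖ ≤ ‖Y‖ / (t - Fintype.card n * g) := by
  have hM : t • M = Y + G * M := by
    rw [← h, Matrix.sub_mul, Matrix.smul_mul, Matrix.one_mul, sub_add_cancel]
  have ht : 0 ≤ t := by
    have : 0 ≤ (Fintype.card n : ℝ) * g := by positivity [(norm_nonneg G).trans hG]
    linarith
  have key : t * ‖M‖ ≤ ‖Y‖ + Fintype.card n * g * ‖M‖ := by
    calc t * ‖M‖ = ‖t • M‖ := by rw [norm_smul, Real.norm_of_nonneg ht]
      _ ≤ ‖Y‖ + ‖G * M‖ := hM ▸ norm_add_le _ _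
      _ ≤ ‖Y‖ + Fintype.card n * g * ‖M‖ := by
        gcongr
        exact (norm_mul_le_card_mul G M).trans (by gcongr)
  rw [le_div_iff₀ (by linarith)]
  linarith

theorem norm_inv_smul_one_add_sqrt_mul_transpose_le [DecidableEq n] {t : ℝ} (ht : 0 < t)
    {A P : Matrix n n ℝ} (hA : ‖A‖ ≤ 1) (hP : A = P * (posSemidef_conjTranspose_mul_self A).sqrt)
    (hn : (Fintype.card n : ℝ) ^ 2 < t ^ 2) :
    ‖(t • 1 + (posSemidef_conjTranspose_mul_self A).sqrt)⁻¹ * Pᵀ‖ ≤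
      ‖t • P - A‖ / (t ^ 2 - Fintype.card n ^ 2) := by
  have hAA := posSemidef_conjTranspose_mul_self A
  have hS : hAA.sqrtᵀ = hAA.sqrt := by
    simpa [conjTranspose_eq_transpose_of_trivial] using hAA.posSemidef_sqrt.isHermitian.eq
  have hSS : hAA.sqrt * hAA.sqrt = Aᵀ * A := by
    simpa [conjTranspose_eq_transpose_of_trivial] using hAA.sqrt_mul_self
  have hT : IsUnit (t • 1 + hAA.sqrt).det := (isUnit_iff_isUnit_det _).mp
    ((PosDef.one.smul ht).add_posSemidef hAA.posSemidef_sqrt).isUnit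
  have hAtA : ‖Aᵀ * A‖ ≤ Fintype.card n :=
    calc ‖Aᵀ * A‖ ≤ Fintype.card n * ‖Aᵀ‖ * ‖A‖ := norm_mul_le_card_mul Aᵀ A
      _ ≤ Fintype.card n * 1 * 1 := by rw [norm_transpose]; gcongr
      _ = Fintype.card n := by ring
  have key := norm_le_div_of_smul_one_sub_mul_eq
    (mul_self_smul_one_sub_transpose_mul_self_mul t hS hSS hP hT) hAtA (by rwa [← sq, ← sq])
  rwa [norm_transpose, ← sq, ← sq] at key

end Matrix

theorem stmt_11_general (N r d : ℕ) (hrN : r ^ 2 < N)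
    (A : Matrix (Fin r) (Fin r) ℝ) (B : Matrix (Fin r) (Fin d) ℝ)
    (C : Matrix (Fin d) (Fin r) ℝ) (D : Matrix (Fin d) (Fin d) ℝ)
    (hsign : ∀ i j, Matrix.fromBlocks A B C D i j = 1 ∨
      Matrix.fromBlocks A B C D i j = -1)
    (PA : Matrix (Fin r) (Fin r) ℝ)
    (hPApol : A = PA * (Matrix.PosSemidef.sqrt (Matrix.posSemidef_conjTranspose_mul_self A))) :
    letI E := C * ((Real.sqrt N • (1 : Matrix (Fin r) (Fin r) ℝ) +
      (Matrix.PosSemidef.sqrt (Matrix.posSemidef_conjTranspose_mul_self A)))⁻¹ * PAᵀ) * B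
    ‖E‖ ≤ r ^ 2 * ‖PA - (Real.sqrt N)⁻¹ • A‖ * Real.sqrt N / (N - r ^ 2) := by
  have hNpos : (0 : ℝ) < N := by exact_mod_cast (Nat.zero_le _).trans_lt hrN
  have hsqrtN : 0 < Real.sqrt N := Real.sqrt_pos.mpr hNpos
  have hN : Real.sqrt N ^ 2 = N := Real.sq_sqrt hNpos.le
  have hA := norm_le_one_of_forall_eq_one_or_eq_neg_one (M := A) fun i j => hsign (.inl i) (.inl j)
  have hM := norm_inv_smul_one_add_sqrt_mul_transpose_le hsqrtN hA hPApol
    (by rw [hN, Fintype.card_fin]; exact_mod_cast hrN)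
  have hY : Real.sqrt N • PA - A = Real.sqrt N • (PA - (Real.sqrt N)⁻¹ • A) := by
    rw [smul_sub, smul_smul, mul_inv_cancel₀ hsqrtN.ne', one_smul]
  rw [hY, norm_smul, Real.norm_of_nonneg hsqrtN.le, hN, Fintype.card_fin] at hM
  have hB := norm_le_one_of_forall_eq_one_or_eq_neg_one (M := B) fun i j => hsign (.inl i) (.inr j)
  have hC := norm_le_one_of_forall_eq_one_or_eq_neg_one (M := C) fun i j => hsign (.inr i) (.inl j)
  set M := (Real.sqrt N • 1 + (posSemidef_conjTranspose_mul_self A).sqrt)⁻¹ * PAᵀ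
  calc ‖C * M * B‖ ≤ r * r * ‖C‖ * ‖M‖ * ‖B‖ := by simpa using norm_mul_mul_le_card_mul C M B
    _ ≤ r * r * 1 * ‖M‖ * 1 := by gcongr
    _ ≤ r * r * 1 * (Real.sqrt N * ‖PA - (Real.sqrt N)⁻¹ • A‖ / (N - r ^ 2)) * 1 := by gcongr
    _ = _ := by ring

/-- Let `H = [[A,B],[C,D]] ∈ M_N(±1)` be Hadamard with `A ∈ M_r(±1)`
invertible, `r ≤ d` and `r² < N`. Write `Pol(D) = (1/√N)(D − E)` with
`E = C·(√N·I + √(AᵗA))⁻¹·Pol(A)ᵗ·B`. Then `‖E‖_∞ ≤ r²·c·√N/(N − r²)`,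
where `c = ‖Pol(A) − A/√N‖_∞`. -/
theorem stmt_11 (N r d : ℕ) (hN : N = r + d) (hrd : r ≤ d) (hrN : r ^ 2 < N)
    (A : Matrix (Fin r) (Fin r) ℝ) (B : Matrix (Fin r) (Fin d) ℝ)
    (C : Matrix (Fin d) (Fin r) ℝ) (D : Matrix (Fin d) (Fin d) ℝ)
    (hsign : ∀ i j, Matrix.fromBlocks A B C D i j = 1 ∨
      Matrix.fromBlocks A B C D i j = -1)
    (hH : Matrix.fromBlocks A B C D * (Matrix.fromBlocks A B C D)ᵀ
      = (N : ℝ) • 1)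
    (hA : IsUnit A.det)
    (PA : Matrix (Fin r) (Fin r) ℝ) (hPA : PAᵀ * PA = 1)
    (hPApol : A = PA * (Matrix.PosSemidef.sqrt (Matrix.posSemidef_conjTranspose_mul_self A))) :
    letI E := C * ((Real.sqrt N • (1 : Matrix (Fin r) (Fin r) ℝ) +
      (Matrix.PosSemidef.sqrt (Matrix.posSemidef_conjTranspose_mul_self A)))⁻¹ * PAᵀ) * B
    ‖E‖ ≤ r ^ 2 * ‖PA - (Real.sqrt N)⁻¹ • A‖ * Real.sqrt N / (N - r ^ 2) :=
  stmt_11_general N r d hrN A B C D hsign PA hPApol
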